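/- arXiv:1501.05386 — 3 statements merged into one kernel-verified Lean document; each statement's English description precedes it below -/
import Mathlib

section
/- Let p be a real polynomial and α < β real numbers. The number of real roots of p in the interval (α, β), counted with multiplicity, is odd if and only if p(α)·p(β) < 0. -/
open Polynomial

lemma aux_prod_neg (s : Multiset ℝ) (h : ∀ x ∈ s, x ≠ 0) :
    s.prod < 0 ↔ Odd (Multiset.card (s.filter (· < 0))) := by
  induction s using Multiset.induction with
  | empty => simp
  | cons a s ih =>
    have ha : a ≠ 0 := h a (Multiset.mem_cons_self a s)
    have hs : ∀ x ∈ s, x ≠ 0 := fun x hx => h x (Multiset.mem_cons_of_mem hx)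
    have hsp : s.prod ≠ 0 := Multiset.prod_ne_zero (fun h0 => hs 0 h0 rfl)
    rw [Multiset.prod_cons]
    by_cases hneg : a < 0
    · rw [show Multiset.filter (fun x => x < 0) (a ::ₘ s) = a ::ₘ Multiset.filter (fun x => x < 0) s from Multiset.filter_cons_of_pos _ hneg]
      simp only [Multiset.card_cons, Nat.odd_add_one]
      rw [← ih hs]
      constructor
      · intro h1 h2
        nlinarith
      · intro h1
        rcases hsp.lt_or_gt with h2 | h2
        · exact absurd h2 h1
        · nlinarith
    · push_neg at hneg
      have hpos : 0 < a := lt_of_le_of_ne hneg (Ne.symm ha)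
      rw [show Multiset.filter (fun x => x < 0) (a ::ₘ s) = Multiset.filter (fun x => x < 0) s from Multiset.filter_cons_of_neg _ (by simpa using hpos.not_gt)]
      rw [← ih hs]
      constructor
      · intro h1; nlinarith
      · intro h1; nlinarith

open Polynomial in
theorem stmt_1 (p : Polynomial ℝ) (hp : p ≠ 0) (α β : ℝ) (hab : α < β)
    (hα : p.eval α ≠ 0) (hβ : p.eval β ≠ 0) :
    Odd (Multiset.card ((p.roots).filter (fun x => α < x ∧ x < β))) ↔
      p.eval α * p.eval β < 0 := by
  obtain ⟨q, hq⟩ := p.prod_multiset_X_sub_C_dvd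
  set s := p.roots with hs
  have hq0 : q ≠ 0 := by rintro rfl; simp at hq; exact hp hq
  -- q has no real roots
  have hqroots : q.roots = 0 := by
    have := roots_mul (hq ▸ hp)
    rw [roots_multiset_prod_X_sub_C, ← hq] at this
    have h2 : p.roots = s + q.roots := this
    have := Multiset.card_add s q.roots
    nth_rewrite 1 [← h2] at this
    rw [hs] at this
    have : Multiset.card q.roots = 0 := by omega
    exact Multiset.card_eq_zero.mp this
  have hqnr : ∀ x : ℝ, q.eval x ≠ 0 := by
    intro x hx
    have : x ∈ q.roots := by rw [mem_roots hq0]; exact hx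
    rw [hqroots] at this; simp at this
  -- q α * q β > 0 by IVT
  have hqpos : 0 < q.eval α * q.eval β := by
    rcases lt_trichotomy (q.eval α * q.eval β) 0 with h1 | h1 | h1
    · exfalso
      have hc : ContinuousOn (fun x => q.eval x) (Set.Icc α β) :=
        (q.continuous_aeval).continuousOn
      rcases mul_neg_iff.mp h1 with ⟨ha, hb⟩ | ⟨ha, hb⟩
      · have := intermediate_value_Ioo' hab.le hc
        have hm : (0:ℝ) ∈ Set.Ioo (q.eval β) (q.eval α) := ⟨hb, ha⟩
        obtain ⟨x, _, hx⟩ := this hm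
        exact hqnr x hx
      · have := intermediate_value_Ioo hab.le hc
        have hm : (0:ℝ) ∈ Set.Ioo (q.eval α) (q.eval β) := ⟨ha, hb⟩
        obtain ⟨x, _, hx⟩ := this hm
        exact hqnr x hx
    · exact absurd h1 (mul_ne_zero (hqnr α) (hqnr β))
    · exact h1
  -- evaluation formula
  have heval : ∀ x : ℝ, p.eval x = (s.map (fun r => x - r)).prod * q.eval x := by
    intro x
    conv_lhs => rw [hq]
    rw [eval_mul, eval_multiset_prod, Multiset.map_map]
    simp [Function.comp_def]
  -- roots are not α or β
  have hroot_ne : ∀ r ∈ s, r ≠ α ∧ r ≠ β := by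
    intro r hr
    have : p.IsRoot r := (mem_roots hp).mp hr
    constructor <;> rintro rfl
    · exact hα this
    · exact hβ this
  have key : p.eval α * p.eval β
      = (s.map (fun r => (α - r) * (β - r))).prod * (q.eval α * q.eval β) := by
    rw [heval α, heval β, Multiset.prod_map_mul]
    ring
  have hne : ∀ x ∈ s.map (fun r => (α - r) * (β - r)), x ≠ 0 := by
    intro x hx
    simp only [Multiset.mem_map] at hx
    obtain ⟨r, hr, rfl⟩ := hx
    obtain ⟨h1, h2⟩ := hroot_ne r hr
    exact mul_ne_zero (sub_ne_zero.mpr (Ne.symm h1)) (sub_ne_zero.mpr (Ne.symm h2))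
  have hcard : Multiset.card (s.filter (fun x => α < x ∧ x < β))
      = Multiset.card ((s.map (fun r => (α - r) * (β - r))).filter (· < 0)) := by
    rw [Multiset.filter_map]
    rw [Multiset.card_map]
    congr 1
    apply Multiset.filter_congr
    intro r hr
    simp only [Function.comp_apply]
    constructor
    · rintro ⟨h1, h2⟩; nlinarith
    · intro h1
      rcases mul_neg_iff.mp h1 with ⟨h2, h3⟩ | ⟨h2, h3⟩
      · nlinarith
      · constructor <;> nlinarith
  rw [hcard, ← aux_prod_neg _ hne, key]
  constructor
  · intro h1; nlinarith
  · intro h1; nlinarith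
end

section
/- (Dandelin root-squaring identity for roots) Let q be a monic complex polynomial of degree n with roots x_1, …, x_n (with multiplicity). Define q₁(x) = (-1)^n · q(w) · q(-w) where w² = x (i.e., q₁ is the polynomial whose evaluation at x equals (-1)^n q(√x) q(-√x)). Then q₁ is a monic polynomial of degree n whose roots are exactly x_1², …, x_n² with multiplicity. -/
open Polynomial in
theorem stmt_4 (n : ℕ) (x : Fin n → ℂ)
    (q q₁ : Polynomial ℂ)
    (hq : q = ∏ j : Fin n, (X - C (x j)))
    (hq₁ : ∀ z : ℂ, q₁.eval (z ^ 2) = (-1) ^ n * q.eval z * q.eval (-z)) :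
    q₁ = ∏ j : Fin n, (X - C (x j ^ 2)) := by
  apply Polynomial.funext
  intro w
  obtain ⟨z, hz⟩ : ∃ z : ℂ, z ^ 2 = w := by
    obtain ⟨z, hz⟩ := IsAlgClosed.exists_pow_nat_eq w (n := 2) two_pos
    exact ⟨z, hz⟩
  rw [← hz, hq₁, hq]
  simp only [eval_prod, eval_sub, eval_X, eval_C]
  have : ((-1 : ℂ)) ^ n = ∏ _j : Fin n, (-1 : ℂ) := by simp
  rw [this, ← Finset.prod_mul_distrib, ← Finset.prod_mul_distrib]
  apply Finset.prod_congr rfl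
  intro j _
  ring
end

section
/- (Newton's method quadratic global convergence in an isolated disc — contraction step) Let p be a complex polynomial of degree n ≥ 2 with simple root x₁, and let y be a point with 0 < 3(n-1)·|y - x₁| < |y - x_j| for all other roots x_j (j = 2,…,n). Then p'(y) ≠ 0 and the Newton iterate y' = y - p(y)/p'(y) satisfies |y' - x₁| ≤ |y - x₁|/2. -/
/-!
Write `d = y - x₁` and `S = p'(y)/p(y) = ∑ⱼ 1/(y - xⱼ) = 1/d + T`. The isolation hypothesis gives
`|T| ≤ (n-1) / (3(n-1)|d|) = 1/(3|d|)`, so `|S| ≥ 2/(3|d|)`; in particular `p'(y) ≠ 0`. The Newton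
iterate satisfies `y' - x₁ = d - 1/S = d T / S`, whose modulus is at most `(1/3) / (2/(3|d|)) = |d|/2`.
-/

open Polynomial

theorem eval_derivative_C_mul_prod_X_sub_C {K ι : Type*} [Field K] (a : K) (s : Finset ι)
    (x : ι → K) {y : K} (hy : ∀ j ∈ s, y ≠ x j) :
    eval y (derivative (C a * ∏ j ∈ s, (X - C (x j)))) =
      eval y (C a * ∏ j ∈ s, (X - C (x j))) * ∑ j ∈ s, (y - x j)⁻¹ := by
  classical
  simp only [derivative_C_mul, derivative_prod_finset, derivative_X_sub_C, mul_one, eval_mul,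
    eval_C, eval_finsetSum, eval_prod, eval_sub, eval_X, Finset.mul_sum, mul_assoc]
  refine Finset.sum_congr rfl fun i hi => ?_
  rw [← Finset.prod_erase_mul s _ hi, mul_inv_cancel_right₀ (sub_ne_zero.mpr (hy i hi))]

theorem norm_sum_inv_le_card_div {𝕜 ι : Type*} [NormedDivisionRing 𝕜] {s : Finset ι}
    {z : ι → 𝕜} {c : ℝ} (hc : 0 < c) (hz : ∀ j ∈ s, c ≤ ‖z j‖) :
    ‖∑ j ∈ s, (z j)⁻¹‖ ≤ s.card / c := by
  calc ‖∑ j ∈ s, (z j)⁻¹‖ ≤ ∑ _j ∈ s, c⁻¹ :=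
        norm_sum_le_of_le s fun j hj => by rw [norm_inv]; exact inv_anti₀ hc (hz j hj)
    _ = s.card / c := by rw [Finset.sum_const, nsmul_eq_mul, div_eq_mul_inv]

theorem norm_sub_inv_inv_add_le {𝕜 : Type*} [NormedField 𝕜] {u t : 𝕜} (hu : u ≠ 0)
    (ht : 3 * ‖u‖ * ‖t‖ ≤ 1) :
    u⁻¹ + t ≠ 0 ∧ ‖u - (u⁻¹ + t)⁻¹‖ ≤ ‖u‖ / 2 := by
  have hu' : 0 < ‖u‖ := norm_pos_iff.mpr hu
  have hS : 2 / (3 * ‖u‖) ≤ ‖u⁻¹ + t‖ := by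
    have h := norm_add_le (u⁻¹ + t) (-t)
    rw [add_neg_cancel_right, norm_neg, norm_inv] at h
    have h3 : ‖t‖ ≤ 1 / (3 * ‖u‖) := by rw [le_div_iff₀ (by positivity)]; linarith
    calc 2 / (3 * ‖u‖) = ‖u‖⁻¹ - 1 / (3 * ‖u‖) := by field_simp; ring
      _ ≤ ‖u⁻¹ + t‖ := by linarith
  have hS0 : u⁻¹ + t ≠ 0 := norm_pos_iff.mp (lt_of_lt_of_le (by positivity) hS)
  refine ⟨hS0, ?_⟩
  have hstep : u - (u⁻¹ + t)⁻¹ = u * t / (u⁻¹ + t) := by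
    rw [eq_div_iff hS0, sub_mul, inv_mul_cancel₀ hS0, mul_add, mul_inv_cancel₀ hu]; ring
  calc ‖u - (u⁻¹ + t)⁻¹‖ = ‖u‖ * ‖t‖ / ‖u⁻¹ + t‖ := by rw [hstep, norm_div, norm_mul]
    _ ≤ (1 / 3) / (2 / (3 * ‖u‖)) :=
        div_le_div₀ (by norm_num) (by linarith) (by positivity) hS
    _ = ‖u‖ / 2 := by field_simp

theorem stmt_16 (n : ℕ) (hn : 2 ≤ n) (a : ℂ) (ha : a ≠ 0) (x : ℕ → ℂ)
    (p : Polynomial ℂ) (hp : p = C a * ∏ j ∈ Finset.Icc 1 n, (X - C (x j)))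
    (y : ℂ) (hy1 : y ≠ x 1)
    (hiso : ∀ j ∈ Finset.Icc 2 n,
      3 * (n - 1 : ℝ) * ‖y - x 1‖ < ‖y - x j‖) :
    Polynomial.eval y (Polynomial.derivative p) ≠ 0 ∧
      ‖y - Polynomial.eval y p / Polynomial.eval y (Polynomial.derivative p)
        - x 1‖ ≤ ‖y - x 1‖ / 2 := by
  have hd : y - x 1 ≠ 0 := sub_ne_zero.mpr hy1
  have hn1 : (1 : ℝ) ≤ n - 1 := by
    have : (2 : ℝ) ≤ n := by exact_mod_cast hn
    linarith
  have hc : 0 < 3 * (n - 1 : ℝ) * ‖y - x 1‖ := by have := norm_pos_iff.mpr hd; positivity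
  have hIcc : Finset.Icc 1 n = insert 1 (Finset.Icc 2 n) :=
    (Finset.insert_Icc_add_one_left_eq_Icc (by omega)).symm
  have hroots : ∀ j ∈ Finset.Icc 1 n, y ≠ x j := by
    rw [hIcc]
    refine Finset.forall_mem_insert _ _ _ |>.mpr ⟨hy1, fun j hj => ?_⟩
    exact sub_ne_zero.mp (norm_pos_iff.mp (hc.trans (hiso j hj)))
  set T := ∑ j ∈ Finset.Icc 2 n, (y - x j)⁻¹
  have hT : 3 * ‖y - x 1‖ * ‖T‖ ≤ 1 := by
    have h := norm_sum_inv_le_card_div hc fun j hj => (hiso j hj).le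
    rw [Nat.card_Icc, show n + 1 - 2 = n - 1 by omega, Nat.cast_sub (by omega), Nat.cast_one,
      le_div_iff₀ hc] at h
    nlinarith
  have hp0 : eval y p ≠ 0 := by
    simpa [hp, eval_prod, ha, Finset.prod_eq_zero_iff, sub_eq_zero] using hroots
  have hp' : eval y (derivative p) = eval y p * ((y - x 1)⁻¹ + T) := by
    rw [hp, eval_derivative_C_mul_prod_X_sub_C a _ x hroots, hIcc,
      Finset.sum_insert (by simp)]
  obtain ⟨hS, hnewton⟩ := norm_sub_inv_inv_add_le hd hT
  refine ⟨hp' ▸ mul_ne_zero hp0 hS, ?_⟩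
  rwa [hp', div_mul_cancel_left₀ hp0, sub_right_comm]
end
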